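/- arXiv:2605.07832 — 3 statements merged into one kernel-verified Lean document; each statement's English description precedes it below -/
import Mathlib

section
/- Let μ > 0, t > 0, and define on ℝ² the wave group e^{tA} with A = [[0,1],[−μ,0]], so e^{tA} = [[cos(√μ t), sin(√μ t)/√μ],[−√μ sin(√μ t), cos(√μ t)]]. Let h = (a,b) ∈ ℝ², define ψ(s) = Φ_t(s) e^{sA} h with Φ_t the normalized bump function, ψ₁(s) its second component and ψ₂(s) its first component. If u(s) = ψ₁(s) + ψ₂'(s), then ∫₀ᵗ e^{(t−s)A} (0, u(s)) ds = e^{tA} h. -/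
lemma aux_dpsi2 (ω t a b : ℝ) (hω : ω ≠ 0) (s : ℝ) :
    HasDerivAt (fun s => 30*s^2*(t-s)^2/t^5 * (Real.cos (ω*s)*a + Real.sin (ω*s)/ω*b))
      ((60*s*(t-s)^2 - 60*s^2*(t-s))/t^5 * (Real.cos (ω*s)*a + Real.sin (ω*s)/ω*b)
        + 30*s^2*(t-s)^2/t^5 * (-(ω*Real.sin (ω*s))*a + Real.cos (ω*s)*b)) s := by
  have hs2 : HasDerivAt (fun s:ℝ => s^2) (2*s) s := by simpa using hasDerivAt_pow 2 s
  have hts : HasDerivAt (fun s:ℝ => (t-s)^2) (2*(t-s)*(-1)) s := by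
    exact (((hasDerivAt_id s).const_sub t).pow 2).congr_deriv (by simp)
  have h1 : HasDerivAt (fun s : ℝ => 30*s^2*(t-s)^2/t^5)
      ((60*s*(t-s)^2 - 60*s^2*(t-s))/t^5) s := by
    have := (((hs2.const_mul 30).mul hts).div_const (t^5))
    exact this.congr_deriv (by ring)
  have hlin : HasDerivAt (fun s:ℝ => ω*s) ω s := by
    simpa using (hasDerivAt_id s).const_mul ω
  have hcos : HasDerivAt (fun s:ℝ => Real.cos (ω*s)) (-(ω*Real.sin (ω*s))) s := by
    have := (Real.hasDerivAt_cos (ω*s)).comp s hlin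
    exact this.congr_deriv (by ring)
  have hsin : HasDerivAt (fun s:ℝ => Real.sin (ω*s)) (ω*Real.cos (ω*s)) s := by
    have := (Real.hasDerivAt_sin (ω*s)).comp s hlin
    exact this.congr_deriv (by ring)
  have h2 : HasDerivAt (fun s:ℝ => Real.cos (ω*s)*a + Real.sin (ω*s)/ω*b)
      (-(ω*Real.sin (ω*s))*a + Real.cos (ω*s)*b) s := by
    have := (hcos.mul_const a).add (((hsin.div_const ω).mul_const b))
    exact this.congr_deriv (by field_simp)
  exact h1.mul h2


lemma aux_key (ω t a b : ℝ) (hω : ω ≠ 0) (ht : t ≠ 0) :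
    (∫ s in (0:ℝ)..t,
      ((Real.sin (ω*(t-s))/ω) *
        (30*s^2*(t-s)^2/t^5 * (-(ω*Real.sin (ω*s))*a + Real.cos (ω*s)*b)
          + ((60*s*(t-s)^2 - 60*s^2*(t-s))/t^5 * (Real.cos (ω*s)*a + Real.sin (ω*s)/ω*b)
            + 30*s^2*(t-s)^2/t^5 * (-(ω*Real.sin (ω*s))*a + Real.cos (ω*s)*b))),
       (Real.cos (ω*(t-s))) *
        (30*s^2*(t-s)^2/t^5 * (-(ω*Real.sin (ω*s))*a + Real.cos (ω*s)*b)
          + ((60*s*(t-s)^2 - 60*s^2*(t-s))/t^5 * (Real.cos (ω*s)*a + Real.sin (ω*s)/ω*b)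
            + 30*s^2*(t-s)^2/t^5 * (-(ω*Real.sin (ω*s))*a + Real.cos (ω*s)*b))))) =
    (Real.cos (ω*t)*a + Real.sin (ω*t)/ω*b, -ω*Real.sin (ω*t)*a + Real.cos (ω*t)*b) := by
  set c₁ := Real.cos (ω*t)*a + Real.sin (ω*t)/ω*b with hc₁
  set c₂ := -ω*Real.sin (ω*t)*a + Real.cos (ω*t)*b with hc₂
  set U : ℝ → ℝ := fun s =>
      30*s^2*(t-s)^2/t^5 * (-(ω*Real.sin (ω*s))*a + Real.cos (ω*s)*b)
        + ((60*s*(t-s)^2 - 60*s^2*(t-s))/t^5 * (Real.cos (ω*s)*a + Real.sin (ω*s)/ω*b)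
          + 30*s^2*(t-s)^2/t^5 * (-(ω*Real.sin (ω*s))*a + Real.cos (ω*s)*b)) with hU
  set F : ℝ → ℝ × ℝ := fun s =>
      ((10*t^2*s^3 - 15*t*s^4 + 6*s^5)/t^5 * c₁
        + Real.sin (ω*(t-s))/ω * (30*s^2*(t-s)^2/t^5 * (Real.cos (ω*s)*a + Real.sin (ω*s)/ω*b)),
       (10*t^2*s^3 - 15*t*s^4 + 6*s^5)/t^5 * c₂
        + Real.cos (ω*(t-s)) * (30*s^2*(t-s)^2/t^5 * (Real.cos (ω*s)*a + Real.sin (ω*s)/ω*b))) with hF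
  have hFd : ∀ s : ℝ, HasDerivAt F ((Real.sin (ω*(t-s))/ω) * U s, Real.cos (ω*(t-s)) * U s) s := by
    intro s
    have hψ := aux_dpsi2 ω t a b hω s
    have hP : HasDerivAt (fun s : ℝ => (10*t^2*s^3 - 15*t*s^4 + 6*s^5)/t^5)
        (30*s^2*(t-s)^2/t^5) s := by
      have h3 : HasDerivAt (fun s:ℝ => s^3) (3*s^2) s := by simpa using hasDerivAt_pow 3 s
      have h4 : HasDerivAt (fun s:ℝ => s^4) (4*s^3) s := by simpa using hasDerivAt_pow 4 s
      have h5 : HasDerivAt (fun s:ℝ => s^5) (5*s^4) s := by simpa using hasDerivAt_pow 5 s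
      have := (((h3.const_mul (10*t^2)).sub (h4.const_mul (15*t))).add
        (h5.const_mul 6)).div_const (t^5)
      exact this.congr_deriv (by ring)
    have hlin : HasDerivAt (fun s:ℝ => ω*(t-s)) (-ω) s := by
      have := ((hasDerivAt_id s).const_sub t).const_mul ω
      exact this.congr_deriv (by ring)
    have hsiny : HasDerivAt (fun s:ℝ => Real.sin (ω*(t-s))/ω) (-Real.cos (ω*(t-s))) s := by
      have := ((Real.hasDerivAt_sin (ω*(t-s))).comp s hlin).div_const ω
      exact this.congr_deriv (by field_simp)
    have hcosy : HasDerivAt (fun s:ℝ => Real.cos (ω*(t-s))) (ω*Real.sin (ω*(t-s))) s := by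
      have := (Real.hasDerivAt_cos (ω*(t-s))).comp s hlin
      exact this.congr_deriv (by ring)
    have h1 := (hP.mul_const c₁).add (hsiny.mul hψ)
    have h2 := (hP.mul_const c₂).add (hcosy.mul hψ)
    have hpair := h1.prodMk h2
    refine hpair.congr_deriv ?_
    have hxy : ω*t = ω*s + ω*(t-s) := by ring
    refine Prod.ext ?_ ?_ <;>
      · simp only [hU, hc₁, hc₂, hxy, Real.cos_add, Real.sin_add]
        field_simp
        ring
  have hcont : Continuous (fun s : ℝ => ((Real.sin (ω*(t-s))/ω) * U s, Real.cos (ω*(t-s)) * U s)) := by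
    fun_prop
  have := intervalIntegral.integral_eq_sub_of_hasDerivAt
    (fun s _ => hFd s) (hcont.intervalIntegrable 0 t)
  rw [this]
  simp only [hF]
  refine Prod.ext ?_ ?_ <;>
    · simp
      field_simp
      ring

theorem stmt_6 (μ t : ℝ) (hμ : 0 < μ) (ht : 0 < t) (a b : ℝ)
    (E : ℝ → ℝ × ℝ → ℝ × ℝ)
    (hE : ∀ s p, E s p =
      (Real.cos (Real.sqrt μ * s) * p.1 + Real.sin (Real.sqrt μ * s) / Real.sqrt μ * p.2,
       -Real.sqrt μ * Real.sin (Real.sqrt μ * s) * p.1 + Real.cos (Real.sqrt μ * s) * p.2))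
    (Φ : ℝ → ℝ) (hΦ : ∀ s : ℝ, Φ s = 30 * s ^ 2 * (t - s) ^ 2 / t ^ 5)
    (ψ₁ ψ₂ : ℝ → ℝ)
    (hψ₁ : ∀ s : ℝ, ψ₁ s = Φ s * (E s (a, b)).2)
    (hψ₂ : ∀ s : ℝ, ψ₂ s = Φ s * (E s (a, b)).1)
    (u : ℝ → ℝ) (hu : ∀ s : ℝ, u s = ψ₁ s + deriv ψ₂ s) :
    (∫ s in (0:ℝ)..t, E (t - s) (0, u s)) = E t (a, b) := by
  set ω := Real.sqrt μ with hωdef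
  have hω : ω ≠ 0 := (Real.sqrt_pos.mpr hμ).ne'
  have ht0 : t ≠ 0 := ht.ne'
  have hψ₂fun : ψ₂ = fun s => 30*s^2*(t-s)^2/t^5 * (Real.cos (ω*s)*a + Real.sin (ω*s)/ω*b) := by
    funext s
    rw [hψ₂, hΦ, hE]
  have hderiv : ∀ s : ℝ, deriv ψ₂ s =
      (60*s*(t-s)^2 - 60*s^2*(t-s))/t^5 * (Real.cos (ω*s)*a + Real.sin (ω*s)/ω*b)
        + 30*s^2*(t-s)^2/t^5 * (-(ω*Real.sin (ω*s))*a + Real.cos (ω*s)*b) := by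
    intro s
    rw [hψ₂fun]
    exact (aux_dpsi2 ω t a b hω s).deriv
  have huu : ∀ s : ℝ, u s =
      30*s^2*(t-s)^2/t^5 * (-(ω*Real.sin (ω*s))*a + Real.cos (ω*s)*b)
        + ((60*s*(t-s)^2 - 60*s^2*(t-s))/t^5 * (Real.cos (ω*s)*a + Real.sin (ω*s)/ω*b)
          + 30*s^2*(t-s)^2/t^5 * (-(ω*Real.sin (ω*s))*a + Real.cos (ω*s)*b)) := by
    intro s
    rw [hu, hψ₁, hΦ, hE, hderiv s]
    ring_nf
  have hfun : (fun s => E (t - s) (0, u s)) = fun s =>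
      ((Real.sin (ω*(t-s))/ω) *
        (30*s^2*(t-s)^2/t^5 * (-(ω*Real.sin (ω*s))*a + Real.cos (ω*s)*b)
          + ((60*s*(t-s)^2 - 60*s^2*(t-s))/t^5 * (Real.cos (ω*s)*a + Real.sin (ω*s)/ω*b)
            + 30*s^2*(t-s)^2/t^5 * (-(ω*Real.sin (ω*s))*a + Real.cos (ω*s)*b))),
       (Real.cos (ω*(t-s))) *
        (30*s^2*(t-s)^2/t^5 * (-(ω*Real.sin (ω*s))*a + Real.cos (ω*s)*b)
          + ((60*s*(t-s)^2 - 60*s^2*(t-s))/t^5 * (Real.cos (ω*s)*a + Real.sin (ω*s)/ω*b)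
            + 30*s^2*(t-s)^2/t^5 * (-(ω*Real.sin (ω*s))*a + Real.cos (ω*s)*b)))) := by
    funext s
    rw [hE, huu s]
    refine Prod.ext ?_ ?_ <;> · dsimp only; ring
  rw [show (∫ s in (0:ℝ)..t, E (t - s) (0, u s)) =
      ∫ s in (0:ℝ)..t, (fun s => E (t - s) (0, u s)) s from rfl, hfun,
    aux_key ω t a b hω ht0, hE]
end

section
/- In the setting of the 2×2 wave group with A = [[0,1],[−μ,0]], μ ≥ 1: if h = (0,b), then the control u(s) = ψ₁(s) + ψ₂'(s) (with ψ(s) = Φ_t(s)e^{sA}h) satisfies ‖u‖²_{L²(0,t)} ≤ C b²/t for a constant C independent of t ∈ (0,T] and of μ. -/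
theorem stmt_7 (T : ℝ) (hT : 0 < T) :
    ∃ C > (0:ℝ), ∀ μ t b : ℝ, 1 ≤ μ → 0 < t → t ≤ T →
      (∫ s in (0:ℝ)..t,
          (30 * s ^ 2 * (t - s) ^ 2 / t ^ 5 * Real.cos (Real.sqrt μ * s) * b +
            deriv (fun r : ℝ =>
              30 * r ^ 2 * (t - r) ^ 2 / t ^ 5 * Real.sin (Real.sqrt μ * r) / Real.sqrt μ * b) s) ^ 2)
        ≤ C * b ^ 2 / t := by
  refine ⟨160 / 7, by norm_num, ?_⟩
  intro μ t b hμ ht htT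
  have hμ0 : (0:ℝ) < μ := by linarith
  have hsμ : (1:ℝ) ≤ Real.sqrt μ := by
    rw [show (1:ℝ) = Real.sqrt 1 by simp]
    exact Real.sqrt_le_sqrt hμ
  have hsμ0 : (0:ℝ) < Real.sqrt μ := by linarith
  have ht0 : t ≠ 0 := ne_of_gt ht
  -- derivative computation
  have hderiv : ∀ s : ℝ,
      HasDerivAt (fun r : ℝ =>
          30 * r ^ 2 * (t - r) ^ 2 / t ^ 5 * Real.sin (Real.sqrt μ * r) / Real.sqrt μ * b)
        ((60 * s * (t - s) ^ 2 - 60 * s ^ 2 * (t - s)) / t ^ 5 * Real.sin (Real.sqrt μ * s)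
            / Real.sqrt μ * b +
          30 * s ^ 2 * (t - s) ^ 2 / t ^ 5 * Real.cos (Real.sqrt μ * s) * b) s := by
    intro s
    have hq : HasDerivAt (fun r : ℝ => t - r) (-1) s := (hasDerivAt_id s).const_sub t
    have hq2 : HasDerivAt (fun r : ℝ => (t - r) ^ 2) (2 * (t - s) ^ 1 * -1) s := hq.pow 2
    have hp : HasDerivAt (fun r : ℝ => 30 * r ^ 2) (30 * (2 * s ^ 1)) s :=
      (hasDerivAt_pow 2 s).const_mul 30
    have hP : HasDerivAt (fun r : ℝ => 30 * r ^ 2 * (t - r) ^ 2 / t ^ 5)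
        ((30 * (2 * s ^ 1) * (t - s) ^ 2 + 30 * s ^ 2 * (2 * (t - s) ^ 1 * -1)) / t ^ 5) s :=
      (hp.mul hq2).div_const (t ^ 5)
    have hlin : HasDerivAt (fun r : ℝ => Real.sqrt μ * r) (Real.sqrt μ * 1) s :=
      (hasDerivAt_id s).const_mul (Real.sqrt μ)
    have hS : HasDerivAt (fun r : ℝ => Real.sin (Real.sqrt μ * r))
        (Real.cos (Real.sqrt μ * s) * (Real.sqrt μ * 1)) s :=
      (Real.hasDerivAt_sin (Real.sqrt μ * s)).comp s hlin
    have h := (((hP.mul hS).div_const (Real.sqrt μ)).mul_const b)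
    refine h.congr_deriv ?_
    field_simp
    ring
  have hdg : deriv (fun r : ℝ =>
      30 * r ^ 2 * (t - r) ^ 2 / t ^ 5 * Real.sin (Real.sqrt μ * r) / Real.sqrt μ * b)
      = fun s : ℝ =>
        (60 * s * (t - s) ^ 2 - 60 * s ^ 2 * (t - s)) / t ^ 5 * Real.sin (Real.sqrt μ * s)
            / Real.sqrt μ * b +
          30 * s ^ 2 * (t - s) ^ 2 / t ^ 5 * Real.cos (Real.sqrt μ * s) * b :=
    funext fun s => (hderiv s).deriv
  rw [hdg]
  -- bound the integrand pointwise by a polynomial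
  set B : ℝ → ℝ := fun s => 7200 * b ^ 2 / t ^ 10 *
      (2 * t ^ 4 * s ^ 4 - 10 * t ^ 3 * s ^ 5 + 19 * t ^ 2 * s ^ 6 - 16 * t * s ^ 7 + 5 * s ^ 8)
    with hB
  have hBint : IntervalIntegrable B MeasureTheory.volume 0 t := by
    apply Continuous.intervalIntegrable
    fun_prop
  have hfint : IntervalIntegrable (fun s : ℝ =>
      (30 * s ^ 2 * (t - s) ^ 2 / t ^ 5 * Real.cos (Real.sqrt μ * s) * b +
        ((60 * s * (t - s) ^ 2 - 60 * s ^ 2 * (t - s)) / t ^ 5 * Real.sin (Real.sqrt μ * s)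
            / Real.sqrt μ * b +
          30 * s ^ 2 * (t - s) ^ 2 / t ^ 5 * Real.cos (Real.sqrt μ * s) * b)) ^ 2)
      MeasureTheory.volume 0 t := by
    apply Continuous.intervalIntegrable
    fun_prop
  have hpt : ∀ x ∈ Set.Icc (0:ℝ) t,
      (30 * x ^ 2 * (t - x) ^ 2 / t ^ 5 * Real.cos (Real.sqrt μ * x) * b +
        ((60 * x * (t - x) ^ 2 - 60 * x ^ 2 * (t - x)) / t ^ 5 * Real.sin (Real.sqrt μ * x)
            / Real.sqrt μ * b +
          30 * x ^ 2 * (t - x) ^ 2 / t ^ 5 * Real.cos (Real.sqrt μ * x) * b)) ^ 2 ≤ B x := by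
    intro x hx
    obtain ⟨hx0, hxt⟩ := hx
    set Φ : ℝ := 30 * x ^ 2 * (t - x) ^ 2 / t ^ 5 with hΦ
    set K : ℝ := (60 * x * (t - x) ^ 2 - 60 * x ^ 2 * (t - x)) / t ^ 5 with hK
    set c : ℝ := Real.cos (Real.sqrt μ * x) with hc
    set S : ℝ := Real.sin (Real.sqrt μ * x) / Real.sqrt μ with hS
    have hEq : K * Real.sin (Real.sqrt μ * x) / Real.sqrt μ * b = K * S * b := by
      rw [hS]; ring
    rw [hEq]
    have hc2 : c ^ 2 ≤ 1 := Real.cos_sq_le_one _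
    have hS2 : S ^ 2 ≤ x ^ 2 := by
      rw [hS, div_pow]
      rw [div_le_iff₀ (by positivity)]
      have h1 : Real.sin (Real.sqrt μ * x) ^ 2 ≤ (Real.sqrt μ * x) ^ 2 :=
        Real.sin_sq_le_sq
      have h2 : (Real.sqrt μ * x) ^ 2 = Real.sqrt μ ^ 2 * x ^ 2 := by ring
      linarith [h1, h2 ▸ h1]
    have h1 : (Φ * c * b + (K * S * b + Φ * c * b)) ^ 2
        ≤ 2 * ((2 * Φ * c * b) ^ 2 + (K * S * b) ^ 2) := by
      nlinarith [sq_nonneg (2 * Φ * c * b - K * S * b)]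
    have h2 : (2 * Φ * c * b) ^ 2 ≤ 4 * Φ ^ 2 * b ^ 2 := by
      have := mul_le_mul_of_nonneg_left hc2 (sq_nonneg (Φ * b))
      nlinarith
    have h3 : (K * S * b) ^ 2 ≤ K ^ 2 * x ^ 2 * b ^ 2 := by
      have := mul_le_mul_of_nonneg_left hS2 (sq_nonneg (K * b))
      nlinarith
    have heq : 8 * Φ ^ 2 * b ^ 2 + 2 * (K ^ 2 * x ^ 2 * b ^ 2) = B x := by
      rw [hΦ, hK, hB]
      field_simp
      ring
    calc (Φ * c * b + (K * S * b + Φ * c * b)) ^ 2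
        ≤ 2 * ((2 * Φ * c * b) ^ 2 + (K * S * b) ^ 2) := h1
      _ ≤ 8 * Φ ^ 2 * b ^ 2 + 2 * (K ^ 2 * x ^ 2 * b ^ 2) := by linarith
      _ = B x := heq
  have hmono := intervalIntegral.integral_mono_on (le_of_lt ht) hfint hBint hpt
  -- evaluate the integral of B
  have hG : ∀ x ∈ Set.uIcc (0:ℝ) t, HasDerivAt (fun s : ℝ => 7200 * b ^ 2 / t ^ 10 *
      (2 * t ^ 4 / 5 * s ^ 5 - 5 * t ^ 3 / 3 * s ^ 6 + 19 * t ^ 2 / 7 * s ^ 7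
        - 2 * t * s ^ 8 + 5 / 9 * s ^ 9)) (B x) x := by
    intro x _
    have h := ((((((hasDerivAt_pow 5 x).const_mul (2 * t ^ 4 / 5)).sub
        ((hasDerivAt_pow 6 x).const_mul (5 * t ^ 3 / 3))).add
        ((hasDerivAt_pow 7 x).const_mul (19 * t ^ 2 / 7))).sub
        ((hasDerivAt_pow 8 x).const_mul (2 * t))).add
        ((hasDerivAt_pow 9 x).const_mul (5 / 9))).const_mul (7200 * b ^ 2 / t ^ 10)
    refine h.congr_deriv ?_
    rw [hB]
    push_cast
    ring
  have hBval : (∫ s in (0:ℝ)..t, B s) = 160 * b ^ 2 / (7 * t) := by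
    rw [intervalIntegral.integral_eq_sub_of_hasDerivAt hG hBint]
    have h10 : t ^ 10 ≠ 0 := pow_ne_zero _ ht0
    have h7 : (7:ℝ) * t ≠ 0 := by positivity
    have hz : (2 * t ^ 4 / 5 * (0:ℝ) ^ 5 - 5 * t ^ 3 / 3 * 0 ^ 6 + 19 * t ^ 2 / 7 * 0 ^ 7
        - 2 * t * 0 ^ 8 + 5 / 9 * 0 ^ 9) = 0 := by norm_num
    rw [hz, mul_zero, sub_zero, div_mul_eq_mul_div, div_eq_div_iff h10 h7]
    ring
  rw [hBval] at hmono
  calc _ ≤ 160 * b ^ 2 / (7 * t) := hmono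
    _ = 160 / 7 * b ^ 2 / t := by ring
end

section
/- In the setting of the 2×2 wave group with A = [[0,1],[−μ,0]], μ ≥ 1: for a general h = (a,b), the control u(s) = ψ₁(s) + ψ₂'(s) satisfies ‖u‖²_{L²(0,t)} ≤ C(μ a² + b²)/t³ for a constant C independent of t ∈ (0,T] and of μ. -/
/-! The control is `u = Φ y + (Φ x)' = 2 Φ y + Φ' x`, where `(x, y)` is the free wave trajectory
`x' = y`, `y' = -μ x` starting at `(a, b)` and `Φ(s) = 30 s² (t - s)² / t⁵`. Both `x²` and `y²`
are bounded by the graph norm `μ a² + b²` (Cauchy–Schwarz against `cos² + sin² = 1`, using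
`μ ≥ 1` for `x`), while `|Φ| ≤ 15 / (8 t)` and `|Φ'| ≤ 15 / t²` on `[0, t]` because
`s (t - s) ≤ t² / 4`. Hence `u² ≤ C (μ a² + b²) / t⁴` pointwise for `t ≤ T`, and integrating over
an interval of length `t` gives the claim. -/

namespace WaveControl

open Real

noncomputable def bump (t s : ℝ) : ℝ := 30 * s ^ 2 * (t - s) ^ 2 / t ^ 5

noncomputable def waveX (μ a b r : ℝ) : ℝ := cos (√μ * r) * a + sin (√μ * r) / √μ * b

noncomputable def waveY (μ a b r : ℝ) : ℝ := -√μ * sin (√μ * r) * a + cos (√μ * r) * b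

theorem hasDerivAt_bump (t s : ℝ) :
    HasDerivAt (bump t) (60 * s * (t - s) * (t - 2 * s) / t ^ 5) s := by
  have h := (((hasDerivAt_pow 2 s).const_mul 30).mul
    (((hasDerivAt_id s).const_sub t).pow 2)).div_const (t ^ 5)
  exact h.congr_deriv (by simp; ring)

theorem hasDerivAt_waveX {μ : ℝ} (hμ : 0 < μ) (a b r : ℝ) :
    HasDerivAt (waveX μ a b) (waveY μ a b r) r := by
  have hlin : HasDerivAt (fun r => √μ * r) √μ r := by
    simpa using (hasDerivAt_id r).const_mul √μ
  have h := (((hasDerivAt_cos _).comp r hlin).mul_const a).add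
    ((((hasDerivAt_sin _).comp r hlin).div_const √μ).mul_const b)
  refine h.congr_deriv ?_
  field_simp [(sqrt_pos.2 hμ).ne']
  simp only [waveY]
  ring

theorem sq_cos_mul_add_sin_mul_le (θ p q : ℝ) : (cos θ * p + sin θ * q) ^ 2 ≤ p ^ 2 + q ^ 2 := by
  nlinarith [sq_nonneg (sin θ * p - cos θ * q), sin_sq_add_cos_sq θ]

theorem waveX_sq_le {μ : ℝ} (hμ : 1 ≤ μ) (a b r : ℝ) : waveX μ a b r ^ 2 ≤ μ * a ^ 2 + b ^ 2 := by
  have hμ0 : 0 < μ := by linarith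
  calc waveX μ a b r ^ 2 = (cos (√μ * r) * a + sin (√μ * r) * (b / √μ)) ^ 2 := by
        simp only [waveX]; ring
    _ ≤ a ^ 2 + (b / √μ) ^ 2 := sq_cos_mul_add_sin_mul_le _ _ _
    _ = a ^ 2 + b ^ 2 / μ := by rw [div_pow, sq_sqrt hμ0.le]
    _ ≤ μ * a ^ 2 + b ^ 2 := by
        gcongr
        · nlinarith [sq_nonneg a]
        · exact div_le_self (sq_nonneg b) hμ

theorem waveY_sq_le {μ : ℝ} (hμ : 0 ≤ μ) (a b r : ℝ) : waveY μ a b r ^ 2 ≤ μ * a ^ 2 + b ^ 2 := by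
  calc waveY μ a b r ^ 2 = (cos (√μ * r) * b + sin (√μ * r) * (-√μ * a)) ^ 2 := by
        simp only [waveY]; ring
    _ ≤ b ^ 2 + (-√μ * a) ^ 2 := sq_cos_mul_add_sin_mul_le _ _ _
    _ = μ * a ^ 2 + b ^ 2 := by rw [mul_pow, neg_sq, sq_sqrt hμ]; ring

theorem abs_bump_le {t s : ℝ} (ht : 0 < t) (hs : s ∈ Set.Icc 0 t) : |bump t s| ≤ 15 / (8 * t) := by
  obtain ⟨hs0, hst⟩ := hs
  have hprod : 4 * (s * (t - s)) ≤ t ^ 2 := by simpa [mul_assoc] using four_mul_le_sq_add s (t - s)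
  have hprod0 : 0 ≤ s * (t - s) := mul_nonneg hs0 (by linarith)
  rw [abs_of_nonneg (by unfold bump; positivity), bump, div_le_div_iff₀ (by positivity) (by positivity)]
  nlinarith [mul_le_mul hprod hprod (by positivity) (by positivity)]

theorem abs_deriv_bump_le {t s : ℝ} (ht : 0 < t) (hs : s ∈ Set.Icc 0 t) :
    |60 * s * (t - s) * (t - 2 * s) / t ^ 5| ≤ 15 / t ^ 2 := by
  obtain ⟨hs0, hst⟩ := hs
  have hprod : 4 * (s * (t - s)) ≤ t ^ 2 := by simpa [mul_assoc] using four_mul_le_sq_add s (t - s)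
  have hprod0 : 0 ≤ s * (t - s) := mul_nonneg hs0 (by linarith)
  have hlin : |t - 2 * s| ≤ t := abs_le.2 ⟨by linarith, by linarith⟩
  rw [abs_div, abs_of_pos (by positivity : (0 : ℝ) < t ^ 5), div_le_div_iff₀ (by positivity) (by positivity)]
  calc |60 * s * (t - s) * (t - 2 * s)| * t ^ 2 = 60 * (s * (t - s)) * |t - 2 * s| * t ^ 2 := by
        rw [show 60 * s * (t - s) * (t - 2 * s) = 60 * (s * (t - s)) * (t - 2 * s) by ring,
          abs_mul, abs_of_nonneg (by positivity : 0 ≤ 60 * (s * (t - s)))]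
    _ ≤ 60 * (t ^ 2 / 4) * t * t ^ 2 := by gcongr; linarith
    _ = 15 * t ^ 5 := by ring

theorem sq_two_mul_mul_add_mul_le {P Q X Y p q M : ℝ} (hP : |P| ≤ p) (hQ : |Q| ≤ q)
    (hX : X ^ 2 ≤ M) (hY : Y ^ 2 ≤ M) : (2 * P * Y + Q * X) ^ 2 ≤ 2 * (4 * p ^ 2 + q ^ 2) * M := by
  have hP2 : P ^ 2 ≤ p ^ 2 := sq_le_sq' (abs_le.1 hP).1 (abs_le.1 hP).2
  have hQ2 : Q ^ 2 ≤ q ^ 2 := sq_le_sq' (abs_le.1 hQ).1 (abs_le.1 hQ).2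
  have hPY : P ^ 2 * Y ^ 2 ≤ p ^ 2 * M := mul_le_mul hP2 hY (sq_nonneg Y) (sq_nonneg p)
  have hQX : Q ^ 2 * X ^ 2 ≤ q ^ 2 * M := mul_le_mul hQ2 hX (sq_nonneg X) (sq_nonneg q)
  nlinarith [sq_nonneg (2 * P * Y - Q * X)]

theorem control_sq_le {μ t : ℝ} (hμ : 1 ≤ μ) (ht : 0 < t) (a b : ℝ) {s : ℝ} (hs : s ∈ Set.Icc 0 t) :
    (bump t s * waveY μ a b s + deriv (fun r => bump t r * waveX μ a b r) s) ^ 2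
      ≤ (225 / 8 * t ^ 2 + 450) * (μ * a ^ 2 + b ^ 2) / t ^ 4 := by
  have hderiv : HasDerivAt (fun r => bump t r * waveX μ a b r) _ s :=
    (hasDerivAt_bump t s).mul (hasDerivAt_waveX (by linarith) a b s)
  rw [hderiv.deriv]
  calc _ = (2 * bump t s * waveY μ a b s
          + 60 * s * (t - s) * (t - 2 * s) / t ^ 5 * waveX μ a b s) ^ 2 := by ring
    _ ≤ 2 * (4 * (15 / (8 * t)) ^ 2 + (15 / t ^ 2) ^ 2) * (μ * a ^ 2 + b ^ 2) :=
        sq_two_mul_mul_add_mul_le (abs_bump_le ht hs) (abs_deriv_bump_le ht hs)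
          (waveX_sq_le hμ a b s) (waveY_sq_le (by linarith) a b s)
    _ = _ := by field_simp; ring

end WaveControl

open WaveControl in
theorem stmt_8_general (T : ℝ) :
    ∃ C > (0:ℝ), ∀ μ t a b : ℝ, 1 ≤ μ → 0 < t → t ≤ T →
      (∫ s in (0:ℝ)..t,
          (30 * s ^ 2 * (t - s) ^ 2 / t ^ 5 *
              (-Real.sqrt μ * Real.sin (Real.sqrt μ * s) * a + Real.cos (Real.sqrt μ * s) * b) +
            deriv (fun r : ℝ =>
              30 * r ^ 2 * (t - r) ^ 2 / t ^ 5 *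
                (Real.cos (Real.sqrt μ * r) * a +
                  Real.sin (Real.sqrt μ * r) / Real.sqrt μ * b)) s) ^ 2)
        ≤ C * (μ * a ^ 2 + b ^ 2) / t ^ 3 := by
  refine ⟨225 / 8 * T ^ 2 + 450, by positivity, fun μ t a b hμ ht htT => ?_⟩
  change (∫ s in (0:ℝ)..t,
      (bump t s * waveY μ a b s + deriv (fun r => bump t r * waveX μ a b r) s) ^ 2) ≤ _
  have hbound := intervalIntegral.norm_integral_le_of_norm_le_const
    (a := 0) (b := t) (f := fun s => (bump t s * waveY μ a b s
      + deriv (fun r => bump t r * waveX μ a b r) s) ^ 2) fun s hs => by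
    rw [Set.uIoc_of_le ht.le] at hs
    rw [Real.norm_of_nonneg (sq_nonneg _)]
    exact control_sq_le hμ ht a b (Set.Ioc_subset_Icc_self hs)
  calc _ ≤ _ := (le_abs_self _).trans hbound
    _ = (225 / 8 * t ^ 2 + 450) * (μ * a ^ 2 + b ^ 2) / t ^ 3 := by
        rw [sub_zero, abs_of_pos ht]; field_simp
    _ ≤ _ := by gcongr

theorem stmt_8 (T : ℝ) (hT : 0 < T) :
    ∃ C > (0:ℝ), ∀ μ t a b : ℝ, 1 ≤ μ → 0 < t → t ≤ T →
      (∫ s in (0:ℝ)..t,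
          (30 * s ^ 2 * (t - s) ^ 2 / t ^ 5 *
              (-Real.sqrt μ * Real.sin (Real.sqrt μ * s) * a + Real.cos (Real.sqrt μ * s) * b) +
            deriv (fun r : ℝ =>
              30 * r ^ 2 * (t - r) ^ 2 / t ^ 5 *
                (Real.cos (Real.sqrt μ * r) * a +
                  Real.sin (Real.sqrt μ * r) / Real.sqrt μ * b)) s) ^ 2)
        ≤ C * (μ * a ^ 2 + b ^ 2) / t ^ 3 :=
  stmt_8_general T
end
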